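/- arXiv:0912.1963 — 10 statements merged into one kernel-verified Lean document; each statement's English description precedes it below -/
import Mathlib

section
/- Let I = (x₁x₂, x₁x₄, x₃x₄) in the polynomial ring K[x₁,x₂,x₃,x₄] over a field K. Then the elements q₁ = x₁x₄ and q₂ = x₁x₂ + x₃x₄ generate I up to radical, i.e., √(q₁, q₂) = √I. -/
set_option synthInstance.maxHeartbeats 1000000
set_option maxHeartbeats 1000000

open MvPolynomial Ideal CategoryTheory

noncomputable section

/-- The arithmetical rank of an ideal: the least `r` such that some `r` elements
generate `I` up to radical. -/
noncomputable def ara {R : Type*} [CommRing R] (I : Ideal R) : ℕ :=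
  sInf {r | ∃ a : Fin r → R, Ideal.radical (Ideal.span (Set.range a)) = Ideal.radical I}

/-- The height of an ideal: the infimum of the heights of the primes containing it. -/
noncomputable def idealHeight {R : Type*} [CommRing R] (I : Ideal R) : ℕ∞ :=
  ⨅ (P : PrimeSpectrum R) (_ : I ≤ P.asIdeal), Order.height P

/-- `q₁ = x₁x₄`, `q₂ = x₁x₂ + x₃x₄` generate `I = (x₁x₂, x₁x₄, x₃x₄)` up to radical. -/
theorem stmt1 (K : Type*) [Field K] :
    Ideal.radical (Ideal.span {(X 0 * X 3 : MvPolynomial (Fin 4) K),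
        X 0 * X 1 + X 2 * X 3}) =
      Ideal.radical (Ideal.span {(X 0 * X 1 : MvPolynomial (Fin 4) K),
        X 0 * X 3, X 2 * X 3}) := by
  apply le_antisymm
  · apply Ideal.radical_mono
    rw [Ideal.span_le]
    rintro p hp
    simp only [Set.mem_insert_iff, Set.mem_singleton_iff] at hp
    rcases hp with rfl | rfl
    · exact Ideal.subset_span (by simp)
    · exact Ideal.add_mem _ (Ideal.subset_span (by simp)) (Ideal.subset_span (by simp))
  · rw [Ideal.radical_le_radical_iff]
    rw [Ideal.span_le]
    rintro p hp
    simp only [Set.mem_insert_iff, Set.mem_singleton_iff] at hp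
    rcases hp with rfl | rfl | rfl
    · rw [SetLike.mem_coe, Ideal.mem_radical_iff]
      refine ⟨2, ?_⟩
      rw [Ideal.mem_span_pair]
      exact ⟨-(X 1 * X 2), X 0 * X 1, by ring⟩
    · exact Ideal.le_radical (Ideal.subset_span (by simp))
    · rw [SetLike.mem_coe, Ideal.mem_radical_iff]
      refine ⟨2, ?_⟩
      rw [Ideal.mem_span_pair]
      exact ⟨-(X 1 * X 2), X 2 * X 3, by ring⟩
end
end

section
/- Let I' = (x₁x₂x₃, x₁x₂x₅, x₁x₄x₅, x₃x₄x₅) in K[x₁,...,x₅]. Then the two elements q₁' = x₁x₄x₅ - x₁²x₂²x₃ and q₂' = x₁x₂x₅ + x₃x₄x₅ - x₁x₂²x₃² generate I' up to radical: √(q₁', q₂') = √I'. -/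
set_option synthInstance.maxHeartbeats 1000000
set_option maxHeartbeats 1000000

open MvPolynomial Ideal CategoryTheory

noncomputable section

/-- `q₁' = x₁x₄x₅ - x₁²x₂²x₃` and `q₂' = x₁x₂x₅ + x₃x₄x₅ - x₁x₂²x₃²` generate
`I' = (x₁x₂x₃, x₁x₂x₅, x₁x₄x₅, x₃x₄x₅)` up to radical. -/
theorem stmt3 (K : Type*) [Field K] :
    Ideal.radical (Ideal.span
        {(X 0 * X 3 * X 4 - X 0 ^ 2 * X 1 ^ 2 * X 2 : MvPolynomial (Fin 5) K),
         X 0 * X 1 * X 4 + X 2 * X 3 * X 4 - X 0 * X 1 ^ 2 * X 2 ^ 2}) =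
      Ideal.radical (Ideal.span
        {(X 0 * X 1 * X 2 : MvPolynomial (Fin 5) K), X 0 * X 1 * X 4,
         X 0 * X 3 * X 4, X 2 * X 3 * X 4}) := by
  set m1 : MvPolynomial (Fin 5) K := X 0 * X 1 * X 2 with hm1
  set m2 : MvPolynomial (Fin 5) K := X 0 * X 1 * X 4 with hm2
  set m3 : MvPolynomial (Fin 5) K := X 0 * X 3 * X 4 with hm3
  set m4 : MvPolynomial (Fin 5) K := X 2 * X 3 * X 4 with hm4
  set q1 : MvPolynomial (Fin 5) K := X 0 * X 3 * X 4 - X 0 ^ 2 * X 1 ^ 2 * X 2 with hq1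
  set q2 : MvPolynomial (Fin 5) K :=
    X 0 * X 1 * X 4 + X 2 * X 3 * X 4 - X 0 * X 1 ^ 2 * X 2 ^ 2 with hq2
  have hmem : ∀ m : MvPolynomial (Fin 5) K, m ∈ ({m1, m2, m3, m4} : Set _) →
      m ∈ Ideal.span ({m1, m2, m3, m4} : Set (MvPolynomial (Fin 5) K)) :=
    fun m hm => Ideal.subset_span hm
  apply le_antisymm
  · have h : Ideal.span {q1, q2} ≤
        Ideal.radical (Ideal.span ({m1, m2, m3, m4} : Set (MvPolynomial (Fin 5) K))) := by
      rw [Ideal.span_le]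
      rintro p hp
      apply Ideal.le_radical
      simp only [Set.mem_insert_iff, Set.mem_singleton_iff] at hp
      rcases hp with rfl | rfl
      · have : q1 = m3 - X 0 * X 1 * m1 := by rw [hq1, hm3, hm1]; ring
        rw [this]
        exact Ideal.sub_mem _ (hmem m3 (by simp)) (Ideal.mul_mem_left _ _ (hmem m1 (by simp)))
      · have : q2 = m2 + m4 - X 1 * X 2 * m1 := by rw [hq2, hm2, hm4, hm1]; ring
        rw [this]
        exact Ideal.sub_mem _ (Ideal.add_mem _ (hmem m2 (by simp)) (hmem m4 (by simp)))
          (Ideal.mul_mem_left _ _ (hmem m1 (by simp)))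
    calc Ideal.radical (Ideal.span {q1, q2})
        ≤ Ideal.radical (Ideal.radical (Ideal.span ({m1, m2, m3, m4} : Set _))) :=
          Ideal.radical_mono h
      _ = _ := Ideal.radical_idem _
  · have h : Ideal.span ({m1, m2, m3, m4} : Set (MvPolynomial (Fin 5) K)) ≤
        Ideal.radical (Ideal.span {q1, q2}) := by
      rw [Ideal.span_le]
      rintro p hp
      simp only [Set.mem_insert_iff, Set.mem_singleton_iff] at hp
      rcases hp with rfl | rfl | rfl | rfl
      · refine ⟨3, Ideal.mem_span_pair.mpr
          ⟨-(X 0 * X 1 * X 2 ^ 2) - X 2 ^ 3 * X 3, X 0 * X 2 ^ 2 * X 3, ?_⟩⟩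
        rw [hq1, hq2, hm1]; ring
      · refine ⟨2, Ideal.mem_span_pair.mpr
          ⟨-(X 1 * X 2 * X 4), X 0 * X 1 * X 4, ?_⟩⟩
        rw [hq1, hq2, hm2]; ring
      · refine ⟨2, Ideal.mem_span_pair.mpr
          ⟨X 0 * X 3 * X 4 - X 0 * X 1 * X 2 ^ 2 * X 3, X 0 ^ 2 * X 1 * X 2 * X 3, ?_⟩⟩
        rw [hq1, hq2, hm3]; ring
      · refine ⟨3, Ideal.mem_span_pair.mpr
          ⟨2 * (X 1 ^ 2 * X 2 ^ 4 * X 3 * X 4) - X 1 * X 2 ^ 2 * X 3 * X 4 ^ 2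
              - X 1 ^ 3 * X 2 ^ 6 * X 3,
           -(X 0 * X 1 ^ 2 * X 2 ^ 3 * X 3 * X 4) + X 2 ^ 2 * X 3 ^ 2 * X 4 ^ 2
              + X 0 * X 1 ^ 3 * X 2 ^ 5 * X 3, ?_⟩⟩
        rw [hq1, hq2, hm4]; ring
    calc Ideal.radical (Ideal.span ({m1, m2, m3, m4} : Set _))
        ≤ Ideal.radical (Ideal.radical (Ideal.span {q1, q2})) := Ideal.radical_mono h
      _ = _ := Ideal.radical_idem _
end
end

section
/- Let R be a commutative ring, I an ideal generated by m₁,...,m_μ, and q₁, q₂ ∈ I elements with √(q₁,q₂) = √I. Suppose m₀ ∈ R is divisible by m₁, and write m₁^ℓ = a₁₁q₁ + a₁₂q₂ for some ℓ ≥ 1 and a₁₁, a₁₂ ∈ R. Let x₀ be a new variable (work in R[x₀]), and set I' = (m₀) + x₀·I·R[x₀]. Then √((x₀q₁ - a₁₂m₀, x₀q₂ + a₁₁m₀)) = √(I') in R[x₀]. -/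
set_option synthInstance.maxHeartbeats 1000000
set_option maxHeartbeats 1000000

open MvPolynomial Ideal CategoryTheory

noncomputable section

open Polynomial in
/-- Key lemma: in `R[x₀]`, the two elements `x₀q₁ - a₁₂m₀` and `x₀q₂ + a₁₁m₀`
generate `I' = (m₀) + x₀·I·R[x₀]` up to radical. -/
theorem stmt4 {R : Type*} [CommRing R] (μ : ℕ) (m : Fin (μ + 1) → R) (I : Ideal R)
    (hI : I = Ideal.span (Set.range m))
    (q₁ q₂ : R) (hq₁ : q₁ ∈ I) (hq₂ : q₂ ∈ I)
    (hrad : Ideal.radical (Ideal.span {q₁, q₂}) = Ideal.radical I)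
    (m₀ : R) (hdvd : m 0 ∣ m₀)
    (ℓ : ℕ) (hℓ : 1 ≤ ℓ) (a₁₁ a₁₂ : R)
    (heq : m 0 ^ ℓ = a₁₁ * q₁ + a₁₂ * q₂)
    (I' : Ideal (Polynomial R))
    (hI' : I' = Ideal.span {Polynomial.C m₀} ⊔
      Ideal.span ((fun r : R => (Polynomial.X : Polynomial R) * Polynomial.C r) '' I)) :
    Ideal.radical (Ideal.span
        {Polynomial.X * Polynomial.C q₁ - Polynomial.C a₁₂ * Polynomial.C m₀,
         Polynomial.X * Polynomial.C q₂ + Polynomial.C a₁₁ * Polynomial.C m₀}) =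
      Ideal.radical I' := by
  obtain ⟨c, hc⟩ := hdvd
  set g₁ := (Polynomial.X : Polynomial R) * Polynomial.C q₁ - Polynomial.C a₁₂ * Polynomial.C m₀ with hg₁
  set g₂ := (Polynomial.X : Polynomial R) * Polynomial.C q₂ + Polynomial.C a₁₁ * Polynomial.C m₀ with hg₂
  set J : Ideal (Polynomial R) := Ideal.span {g₁, g₂} with hJ
  have hm₀ : Polynomial.C m₀ ∈ J.radical := by
    refine ⟨ℓ + 1, ?_⟩
    rw [Ideal.mem_span_pair]
    refine ⟨-(Polynomial.C q₂ * Polynomial.C c ^ ℓ), Polynomial.C q₁ * Polynomial.C c ^ ℓ, ?_⟩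
    have hR : c ^ ℓ * (q₁ * (a₁₁ * m₀)) + c ^ ℓ * (q₂ * (a₁₂ * m₀)) = m₀ ^ (ℓ + 1) := by
      rw [hc]; linear_combination (-(c ^ ℓ * (m 0 * c))) * heq
    have h := congrArg (Polynomial.C : R →+* Polynomial R) hR
    simp only [map_add, _root_.map_mul, map_pow, RingHom.coe_coe] at h
    rw [hg₁, hg₂]
    linear_combination h
  have hXq₁ : (Polynomial.X : Polynomial R) * Polynomial.C q₁ ∈ J.radical := by
    have h1 : g₁ ∈ J.radical := Ideal.le_radical (Ideal.subset_span (by simp))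
    have h2 : Polynomial.C a₁₂ * Polynomial.C m₀ ∈ J.radical := Ideal.mul_mem_left _ _ hm₀
    have := add_mem h1 h2
    simpa [hg₁] using this
  have hXq₂ : (Polynomial.X : Polynomial R) * Polynomial.C q₂ ∈ J.radical := by
    have h1 : g₂ ∈ J.radical := Ideal.le_radical (Ideal.subset_span (by simp))
    have h2 : Polynomial.C a₁₁ * Polynomial.C m₀ ∈ J.radical := Ideal.mul_mem_left _ _ hm₀
    have := sub_mem h1 h2
    simpa [hg₂] using this
  apply le_antisymm
  · apply Ideal.radical_mono
    rw [Ideal.span_le, hI']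
    rintro p hp
    simp only [Set.mem_insert_iff, Set.mem_singleton_iff] at hp
    rcases hp with rfl | rfl
    · exact sub_mem (Ideal.mem_sup_right (Ideal.subset_span ⟨q₁, hq₁, rfl⟩))
        (Ideal.mem_sup_left (Ideal.mem_span_singleton.2 (Dvd.intro_left _ rfl)))
    · exact add_mem (Ideal.mem_sup_right (Ideal.subset_span ⟨q₂, hq₂, rfl⟩))
        (Ideal.mem_sup_left (Ideal.mem_span_singleton.2 (Dvd.intro_left _ rfl)))
  · have hI'le : I' ≤ J.radical := by
      rw [hI']
      apply sup_le
      · exact (Ideal.span_singleton_le_iff_mem _).2 hm₀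
      · rw [Ideal.span_le]
        rintro p ⟨r, hr, rfl⟩
        have hrr : r ∈ (Ideal.span {q₁, q₂}).radical := by
          rw [hrad]; exact Ideal.le_radical hr
        obtain ⟨n, hn⟩ := hrr
        rw [Ideal.mem_span_pair] at hn
        obtain ⟨b₁, b₂, hb⟩ := hn
        have hb' := congrArg (Polynomial.C : R →+* Polynomial R) hb
        simp only [map_add, _root_.map_mul, map_pow, RingHom.coe_coe] at hb'
        have key : ((Polynomial.X : Polynomial R) * Polynomial.C r) ^ (n + 1) ∈ J.radical := by
          have hkey : ((Polynomial.X : Polynomial R) * Polynomial.C r) ^ (n + 1)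
              = Polynomial.X ^ n * Polynomial.C b₁ * Polynomial.C r * (Polynomial.X * Polynomial.C q₁) + Polynomial.X ^ n * Polynomial.C b₂ * Polynomial.C r * (Polynomial.X * Polynomial.C q₂) := by
            linear_combination (-((Polynomial.X : Polynomial R) ^ (n + 1) * Polynomial.C r)) * hb'
          rw [hkey]
          exact add_mem (Ideal.mul_mem_left _ _ hXq₁) (Ideal.mul_mem_left _ _ hXq₂)
        exact Ideal.mem_radical_of_pow_mem key
    calc I'.radical ≤ (J.radical).radical := Ideal.radical_mono hI'le
      _ = J.radical := Ideal.radical_idem J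
end
end

section
/- Let Γ be a simplicial complex on X = {x₁,...,xₙ} with facets G₁,...,G_μ, let F ⊆ G₁ be a face, x₀ a new vertex, and Γ' = Γ ∪ cone_{x₀}(F). Then the Stanley–Reisner ideal of the Alexander dual of Γ' in K[X ∪ {x₀}] equals m₀R' + x₀·I·R', where I = I_{Γ*} is the Alexander dual ideal of Γ in K[X] and m₀ = ∏_{x_i ∈ (X∪{x₀}) \ (F∪{x₀})} x_i; moreover m₀ is divisible by the generator m₁ = ∏_{x_i ∈ X \ G₁} x_i. -/
set_option synthInstance.maxHeartbeats 1000000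
set_option maxHeartbeats 1000000

open MvPolynomial Ideal CategoryTheory

noncomputable section

/-- `Δ` is a simplicial complex on its vertex set: it contains all singletons and
is closed under taking subsets. -/
def IsSimplicialComplex {V : Type*} (Δ : Set (Finset V)) : Prop :=
  (∀ v : V, {v} ∈ Δ) ∧ ∀ s ∈ Δ, ∀ t ⊆ s, t ∈ Δ

/-- The Stanley--Reisner ideal of `Δ`: generated by the squarefree monomials
corresponding to non-faces of `Δ`. -/
def SRideal (K : Type*) [Field K] {n : ℕ} (Δ : Set (Finset (Fin n))) :
    Ideal (MvPolynomial (Fin n) K) :=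
  Ideal.span {p | ∃ s : Finset (Fin n), s ∉ Δ ∧ p = ∏ i ∈ s, X i}

/-- Adding the cone `cone_{x₀} F` over a face `F`, where `x₀` is the new vertex
`Fin.last n`. -/
def coneComplex {n : ℕ} (Δ : Set (Finset (Fin n))) (F : Finset (Fin n)) :
    Set (Finset (Fin (n + 1))) :=
  ((fun s : Finset (Fin n) => s.image Fin.castSucc) '' Δ) ∪
    {s | s ⊆ insert (Fin.last n) (F.image Fin.castSucc)}

/-!
Every face of `Γ'` lies in the image of some `G j` or in the cone `{x₀} ∪ F`, and the
Stanley–Reisner ideal of the Alexander dual of a complex is generated by the monomials of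
the complements of any such covering family of faces: the complement of `G j` in
`X ∪ {x₀}` gives `x₀ · m_j`, and the complement of the cone gives `m₀ = ∏_{X \ F} x`,
which `m₁` divides because `F ⊆ G₁`.
-/

lemma Finset.univ_sdiff_image_castSucc {n : ℕ} (t : Finset (Fin n)) :
    (Finset.univ : Finset (Fin (n + 1))) \ t.image Fin.castSucc =
      insert (Fin.last n) ((Finset.univ \ t).image Fin.castSucc) := by
  ext v
  refine Fin.lastCases ?_ (fun i => ?_) v
  · simp [fun x : Fin n => (Fin.castSucc_lt_last x).ne]
  · simp [(Fin.castSucc_injective n).eq_iff, (Fin.castSucc_lt_last i).ne]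

lemma Finset.univ_sdiff_insert_last_image_castSucc {n : ℕ} (t : Finset (Fin n)) :
    (Finset.univ : Finset (Fin (n + 1))) \ insert (Fin.last n) (t.image Fin.castSucc) =
      (Finset.univ \ t).image Fin.castSucc := by
  ext v
  refine Fin.lastCases ?_ (fun i => ?_) v
  · simp [fun x : Fin n => (Fin.castSucc_lt_last x).ne]
  · simp [(Fin.castSucc_injective n).eq_iff, (Fin.castSucc_lt_last i).ne]

namespace MvPolynomial

lemma rename_prod_X_of_injective {R σ τ : Type*} [CommSemiring R] [DecidableEq τ]
    {f : σ → τ} (hf : Function.Injective f) (s : Finset σ) :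
    rename f (∏ i ∈ s, (X i : MvPolynomial σ R)) = ∏ i ∈ s.image f, X i := by
  rw [map_prod, Finset.prod_image fun a _ b _ h => hf h]
  simp only [rename_X]

lemma X_last_mul_rename_castSucc_prod_X {R : Type*} [CommSemiring R] {n : ℕ}
    (s : Finset (Fin n)) :
    X (Fin.last n) * rename Fin.castSucc (∏ i ∈ s, (X i : MvPolynomial (Fin n) R)) =
      ∏ i ∈ insert (Fin.last n) (s.image Fin.castSucc), X i := by
  rw [Finset.prod_insert (by simp [fun x : Fin n => (Fin.castSucc_lt_last x).ne]),
    rename_prod_X_of_injective (Fin.castSucc_injective n)]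

end MvPolynomial

lemma Ideal.span_image_mul_map_span {R S F : Type*} [CommSemiring R] [CommSemiring S]
    [FunLike F R S] [RingHomClass F R S] (φ : F) (c : S) (T : Set R) :
    Ideal.span ((fun p => c * φ p) '' (Ideal.span T : Set R)) =
      Ideal.span ((fun p => c * φ p) '' T) := by
  have key : ∀ U : Set R,
      Ideal.span ((fun p => c * φ p) '' U) = Ideal.span {c} * Ideal.span (φ '' U) := by
    intro U
    rw [Ideal.span_mul_span, Set.singleton_mul, Set.image_image]
  rw [key, key, ← Ideal.map_span, Ideal.span_eq, Ideal.map_span]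

lemma SRideal_alexanderDual_eq_span {K ι : Type*} [Field K] {n : ℕ}
    (Δ : Set (Finset (Fin n))) (H : ι → Finset (Fin n))
    (hfaces : ∀ s, s ∈ Δ ↔ ∃ j, s ⊆ H j) :
    SRideal K {s | Finset.univ \ s ∉ Δ} =
      Ideal.span (Set.range fun j => ∏ i ∈ Finset.univ \ H j, X i) := by
  apply le_antisymm
  · refine Ideal.span_le.2 ?_
    rintro _ ⟨s, hs, rfl⟩
    obtain ⟨j, hj⟩ := (hfaces _).1 (not_not.1 hs)
    have hsub : Finset.univ \ H j ⊆ s := by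
      simpa using Finset.sdiff_subset_sdiff (le_refl Finset.univ) hj
    exact Ideal.mem_of_dvd _ (Finset.prod_dvd_prod_of_subset _ _ _ hsub)
      (Ideal.subset_span ⟨j, rfl⟩)
  · refine Ideal.span_le.2 ?_
    rintro _ ⟨j, rfl⟩
    refine Ideal.subset_span ⟨_, ?_, rfl⟩
    simpa using (hfaces (H j)).2 ⟨j, le_rfl⟩

lemma mem_coneComplex_iff {n : ℕ} {ι : Type*} {Γ : Set (Finset (Fin n))}
    {G : ι → Finset (Fin n)} (hfaces : ∀ s, s ∈ Γ ↔ ∃ j, s ⊆ G j) (F : Finset (Fin n))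
    (s : Finset (Fin (n + 1))) :
    s ∈ coneComplex Γ F ↔ ∃ j : Option ι, s ⊆
      j.elim (insert (Fin.last n) (F.image Fin.castSucc)) fun j => (G j).image Fin.castSucc := by
  constructor
  · rintro (⟨t, ht, rfl⟩ | hs)
    · obtain ⟨j, hj⟩ := (hfaces t).1 ht
      exact ⟨some j, Finset.image_subset_image hj⟩
    · exact ⟨none, hs⟩
  · rintro ⟨none | j, hj⟩
    · exact Or.inr hj
    · obtain ⟨t, ht, rfl⟩ := Finset.subset_image_iff.1 hj
      exact Or.inl ⟨t, (hfaces t).2 ⟨j, ht⟩, rfl⟩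

theorem stmt8_general (K : Type*) [Field K] (n μ : ℕ) (Γ : Set (Finset (Fin n)))
    (G : Fin (μ + 1) → Finset (Fin n))
    (hfaces : ∀ s, s ∈ Γ ↔ ∃ j, s ⊆ G j)
    (F : Finset (Fin n)) (hF : F ⊆ G 0)
    (I : Ideal (MvPolynomial (Fin n) K))
    (hI : I = Ideal.span (Set.range fun j => ∏ i ∈ Finset.univ \ G j, X i))
    (m₀ : MvPolynomial (Fin (n + 1)) K)
    (hm₀ : m₀ = ∏ i ∈ Finset.univ \ insert (Fin.last n) (F.image Fin.castSucc), X i) :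
    SRideal K {s : Finset (Fin (n + 1)) | Finset.univ \ s ∉ coneComplex Γ F} =
      Ideal.span {m₀} ⊔ Ideal.span
        ((fun p => X (Fin.last n) * p) ''
          (MvPolynomial.rename (Fin.castSucc : Fin n → Fin (n + 1)) ''
            (I : Set (MvPolynomial (Fin n) K)))) ∧
    MvPolynomial.rename (Fin.castSucc : Fin n → Fin (n + 1))
      (∏ i ∈ Finset.univ \ G 0, X i) ∣ m₀ := by
  have hm₀' : m₀ = rename Fin.castSucc (∏ i ∈ Finset.univ \ F, X i) := by
    rw [hm₀, Finset.univ_sdiff_insert_last_image_castSucc,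
      rename_prod_X_of_injective (Fin.castSucc_injective n)]
  refine ⟨?_, hm₀' ▸ map_dvd _ (Finset.prod_dvd_prod_of_subset _ _ _
    (Finset.sdiff_subset_sdiff le_rfl hF))⟩
  have hgen : ∀ j, ∏ i ∈ Finset.univ \ (G j).image Fin.castSucc, (X i : MvPolynomial _ K) =
      X (Fin.last n) * rename Fin.castSucc (∏ i ∈ Finset.univ \ G j, X i) := fun j => by
    rw [Finset.univ_sdiff_image_castSucc, X_last_mul_rename_castSucc_prod_X]
  rw [SRideal_alexanderDual_eq_span _ _ (mem_coneComplex_iff hfaces F), Option.range_eq,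
    Set.insert_eq, Ideal.span_union, Set.image_image, hI, Ideal.span_image_mul_map_span,
    ← Set.range_comp]
  simp only [Option.elim, Function.comp_def, hgen, ← hm₀]

/-- The Stanley--Reisner ideal of the Alexander dual of `Γ' = Γ ∪ cone_{x₀} F`
equals `m₀R' + x₀·I·R'`, where `I` is the Alexander dual ideal of `Γ`;
moreover `m₁ = ∏_{x ∉ G₁} x` divides `m₀`. -/
theorem stmt8 (K : Type*) [Field K] (n μ : ℕ) (Γ : Set (Finset (Fin n)))
    (hΓ : IsSimplicialComplex Γ) (G : Fin (μ + 1) → Finset (Fin n))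
    (hfaces : ∀ s, s ∈ Γ ↔ ∃ j, s ⊆ G j)
    (hmax : ∀ j k, G j ⊆ G k → j = k)
    (F : Finset (Fin n)) (hF : F ⊆ G 0)
    (I : Ideal (MvPolynomial (Fin n) K))
    (hI : I = Ideal.span (Set.range fun j => ∏ i ∈ Finset.univ \ G j, X i))
    (m₀ : MvPolynomial (Fin (n + 1)) K)
    (hm₀ : m₀ = ∏ i ∈ Finset.univ \ insert (Fin.last n) (F.image Fin.castSucc), X i) :
    SRideal K {s : Finset (Fin (n + 1)) | Finset.univ \ s ∉ coneComplex Γ F} =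
      Ideal.span {m₀} ⊔ Ideal.span
        ((fun p => X (Fin.last n) * p) ''
          (MvPolynomial.rename (Fin.castSucc : Fin n → Fin (n + 1)) ''
            (I : Set (MvPolynomial (Fin n) K)))) ∧
    MvPolynomial.rename (Fin.castSucc : Fin n → Fin (n + 1))
      (∏ i ∈ Finset.univ \ G 0, X i) ∣ m₀ :=
  stmt8_general K n μ Γ G hfaces F hF I hI m₀ hm₀
end
end

section
/- Let R be a commutative ring, I an ideal with ara(I) = h witnessed by q₁,...,q_h, let m₀ ∈ R, and in R' = R[x₀] set I' = (m₀) + x₀·I·R'. Then √((m₀, x₀q₁, ..., x₀q_h)) = √(I') in R'. Consequently ara(I') ≤ ara(I) + 1. -/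
set_option synthInstance.maxHeartbeats 1000000
set_option maxHeartbeats 1000000

open MvPolynomial Ideal CategoryTheory

noncomputable section

/-!
In `R[x₀]` the ideal generated by `x₀ · s` is `(x₀) · sR[x₀]`. The radical of a product is the
intersection of the radicals, and the radical of an extended ideal depends only on the radical of
the ideal being extended; so replacing `I` by `(q₁, …, q_h)` in `x₀ · I · R[x₀]` does not change
the radical, and neither does adding `(m₀)`, as `√(J ⊔ K)` depends only on `√J` and `√K`.
-/

theorem ara_le_of_radical_span_range_eq {R : Type*} [CommRing R] {I : Ideal R} {n : ℕ}
    (a : Fin n → R) (ha : radical (span (Set.range a)) = radical I) : ara I ≤ n :=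
  Nat.sInf_le ⟨a, ha⟩

theorem Ideal.radical_map_radical {R S : Type*} [CommRing R] [CommRing S] (f : R →+* S)
    (I : Ideal R) : radical (map f (radical I)) = radical (map f I) :=
  le_antisymm (radical_le_radical_iff.mpr (map_radical_le f))
    (radical_mono (map_mono le_radical))

theorem Ideal.span_image_mul_left_comp {R S : Type*} [CommRing R] [CommRing S] (f : R →+* S)
    (x : S) (s : Set R) :
    span ((fun r => x * f r) '' s) = span {x} * map f (span s) := by
  rw [map_span, span_mul_span', Set.singleton_mul, Set.image_image]

theorem Ideal.radical_span_image_mul_left_comp_eq {R S : Type*} [CommRing R] [CommRing S]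
    (f : R →+* S) (x : S) {s t : Set R} (h : radical (span s) = radical (span t)) :
    radical (span ((fun r => x * f r) '' s)) = radical (span ((fun r => x * f r) '' t)) := by
  simp only [span_image_mul_left_comp, radical_mul, ← radical_map_radical f (span _), h]

/-- If `q₁,…,q_h` generate `I` up to radical, then `m₀, x₀q₁, …, x₀q_h` generate
`I' = (m₀) + x₀·I·R[x₀]` up to radical; consequently `ara I' ≤ ara I + 1`. -/
theorem stmt10 {R : Type*} [CommRing R] (I : Ideal R) (h : ℕ) (q : Fin h → R)
    (hq : Ideal.radical (Ideal.span (Set.range q)) = Ideal.radical I)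
    (hara : ara I = h) (m₀ : R)
    (I' : Ideal (Polynomial R))
    (hI' : I' = Ideal.span {Polynomial.C m₀} ⊔
      Ideal.span ((fun r : R => (Polynomial.X : Polynomial R) * Polynomial.C r) '' I)) :
    Ideal.radical (Ideal.span ({Polynomial.C m₀} ∪
        Set.range fun i => (Polynomial.X : Polynomial R) * Polynomial.C (q i))) =
      Ideal.radical I' ∧ ara I' ≤ ara I + 1 := by
  have hx₀q :
      radical (span (Set.range fun i => (Polynomial.X : Polynomial R) * Polynomial.C (q i))) =
        radical (span ((fun r => Polynomial.X * Polynomial.C r) '' I)) := by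
    rw [Set.range_comp' (fun r => Polynomial.X * Polynomial.C r)]
    exact radical_span_image_mul_left_comp_eq _ _ (by rw [hq, span_eq])
  have key : radical (span ({Polynomial.C m₀} ∪
      Set.range fun i => (Polynomial.X : Polynomial R) * Polynomial.C (q i))) = radical I' := by
    rw [hI', span_union, radical_sup, hx₀q, ← radical_sup]
  refine ⟨key, hara ▸ ara_le_of_radical_span_range_eq
    (Fin.cons (Polynomial.C m₀) fun i => Polynomial.X * Polynomial.C (q i)) ?_⟩
  rwa [Fin.range_cons, Set.insert_eq]
end
end

section
/- Let I be a squarefree monomial ideal in R = K[x₁,x₂,x₃] of height 2 with R/I Cohen–Macaulay and indeg I ≥ 2. Then I = (x₁x₂, x₁x₃, x₂x₃) (up to permutation of variables), and ara(I) = 2. -/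
/-!
No variable lies in `I`, so every squarefree generator has degree at least `2`; and `I` has
height `2`, so by Krull's principal ideal theorem `I ⊄ (xᵢ)` for each `i`, i.e. some generator
avoids `xᵢ` and is therefore the product of the other two variables. Every squarefree monomial of
degree `≥ 2` in three variables is a multiple of one of these, hence `I = (x₁x₂, x₁x₃, x₂x₃)`.

Since `(x₁x₃)² = x₁x₃ (x₁x₃ + x₂x₃) - x₃² x₁x₂` (and likewise for `x₂x₃`), the two elements
`x₁x₂, x₁x₃ + x₂x₃` generate `I` up to radical, so `ara I ≤ 2`; Krull's height theorem gives
`ara I ≥ height I = 2`.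
-/

set_option synthInstance.maxHeartbeats 1000000
set_option maxHeartbeats 1000000

open MvPolynomial Ideal CategoryTheory

noncomputable section

/-- A squarefree monomial ideal: one generated by squarefree monomials. -/
def IsSqfreeMonomialIdeal {K : Type*} [Field K] {n : ℕ} (I : Ideal (MvPolynomial (Fin n) K)) :
    Prop :=
  ∃ S : Set (Finset (Fin n)), I = Ideal.span ((fun s : Finset (Fin n) => ∏ i ∈ s, X i) '' S)

/-- `R/I` is Cohen--Macaulay (graded case): there is a regular sequence on `R/I`,
consisting of elements of the irrelevant maximal ideal, whose length equals the
Krull dimension of `R/I`. -/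
def QuotIsCM {K : Type*} [Field K] {n : ℕ} (I : Ideal (MvPolynomial (Fin n) K)) : Prop :=
  ∃ rs : List (MvPolynomial (Fin n) K),
    (∀ r ∈ rs, r ∈ Ideal.span (Set.range (X : Fin n → MvPolynomial (Fin n) K))) ∧
    RingTheory.Sequence.IsRegular (MvPolynomial (Fin n) K ⧸ I)
      (rs.map (Ideal.Quotient.mk I)) ∧
    ((rs.length : ℕ∞) : WithBot ℕ∞) = ringKrullDim (MvPolynomial (Fin n) K ⧸ I)

section Height

variable {R : Type*} [CommRing R]

lemma idealHeight_le_height {I P : Ideal R} [P.IsPrime] (h : I ≤ P) :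
    idealHeight I ≤ P.height :=
  (iInf₂_le (⟨P, ‹_›⟩ : PrimeSpectrum R) h).trans
    (PrimeSpectrum.height_eq_orderHeight ⟨P, ‹_›⟩).ge

variable [IsNoetherianRing R]

lemma idealHeight_le_one_of_le_span_singleton {I : Ideal R} {x : R} (hx : Prime x)
    (h : I ≤ span {x}) : idealHeight I ≤ 1 := by
  have : (span {x}).IsPrime := (span_singleton_prime hx.ne_zero).mpr hx
  refine (idealHeight_le_height (P := span {x}) h).trans ?_
  exact height_le_one_of_isPrincipal_of_mem_minimalPrimes (span {x}) (span {x})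
    (by rw [minimalPrimes_eq_subsingleton_self]; rfl)

lemma idealHeight_le_of_radical_span_eq {I : Ideal R} (hI : I ≠ ⊤) {r : ℕ} (a : Fin r → R)
    (ha : (span (Set.range a)).radical = I.radical) : idealHeight I ≤ r := by
  have hne : span (Set.range a) ≠ ⊤ := fun h ↦ hI (radical_eq_top.mp (ha ▸ h ▸ radical_top R))
  obtain ⟨P, hP⟩ := nonempty_minimalPrimes hne
  have := hP.isPrime
  have hIP : I ≤ P := I.le_radical.trans (ha ▸ (hP.isPrime.radical_le_iff.mpr hP.le))
  calc idealHeight I ≤ P.height := idealHeight_le_height hIP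
    _ ≤ (Set.range a).ncard := height_le_card_of_mem_minimalPrimes_span (Set.finite_range a) hP
    _ ≤ r := by
      rw [← Set.image_univ]
      exact_mod_cast (Set.ncard_image_le (f := a)).trans (by simp)

lemma ara_eq_of_radical_span_eq {I : Ideal R} (hI : I ≠ ⊤) {n : ℕ} (hn : idealHeight I = n)
    (a : Fin n → R) (ha : (span (Set.range a)).radical = I.radical) : ara I = n :=
  le_antisymm (Nat.sInf_le ⟨a, ha⟩) <| le_csInf ⟨n, a, ha⟩ fun _ ⟨b, hb⟩ ↦
    by exact_mod_cast hn ▸ idealHeight_le_of_radical_span_eq hI b hb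

end Height

lemma radical_span_pair_eq_radical_span_triple {R : Type*} [CommRing R] (x y z : R) :
    (span {x * y, x * z + y * z}).radical = (span {x * y, x * z, y * z}).radical := by
  refine le_antisymm (radical_mono ?_) (radical_le_radical_iff.mpr ?_) <;>
    simp only [span_le, Set.insert_subset_iff, Set.singleton_subset_iff, SetLike.mem_coe]
  · exact ⟨subset_span (by simp), add_mem (subset_span (by simp)) (subset_span (by simp))⟩
  refine ⟨le_radical (subset_span (by simp)), ⟨2, mem_span_pair.mpr ⟨-z ^ 2, x * z, by ring⟩⟩,
    ⟨2, mem_span_pair.mpr ⟨-z ^ 2, y * z, by ring⟩⟩⟩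

section Monomials

variable {R σ : Type*} [CommRing R]

lemma span_image_prod_X_le_span_X {S : Set (Finset σ)} {i : σ} (h : ∀ s ∈ S, i ∈ s) :
    span ((fun s ↦ ∏ j ∈ s, (X j : MvPolynomial σ R)) '' S) ≤ span {X i} := by
  rw [span_le]
  rintro _ ⟨s, hs, rfl⟩
  exact mem_span_singleton.mpr (Finset.dvd_prod_of_mem X (h s hs))

lemma span_image_prod_X_eq_of_subset {S T : Set (Finset σ)} (hTS : T ⊆ S)
    (hST : ∀ s ∈ S, ∃ t ∈ T, t ⊆ s) :
    span ((fun s ↦ ∏ j ∈ s, (X j : MvPolynomial σ R)) '' S) =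
      span ((fun s ↦ ∏ j ∈ s, X j) '' T) := by
  refine le_antisymm ?_ (span_mono (Set.image_mono hTS))
  rw [span_le]
  rintro _ ⟨s, hs, rfl⟩
  obtain ⟨t, ht, hts⟩ := hST s hs
  exact Ideal.mem_of_dvd _ (Finset.prod_dvd_prod_of_subset t s X hts) (subset_span ⟨t, ht, rfl⟩)

lemma one_lt_card_of_prod_X_mem [Nonempty σ] {I : Ideal (MvPolynomial σ R)} {s : Finset σ}
    (hX : ∀ i, X i ∉ I) (hs : ∏ j ∈ s, X j ∈ I) : 1 < s.card := by
  by_contra! h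
  obtain ⟨i, hi⟩ := Finset.card_le_one_iff_subset_singleton.mp h
  exact hX i (I.mem_of_dvd (by simpa using Finset.prod_dvd_prod_of_subset s {i} X hi) hs)

end Monomials

namespace Finset

variable {α : Type*} [Fintype α] [DecidableEq α] {s : Finset α}

lemma eq_univ_erase_of_notMem {i : α} (hi : i ∉ s) (hs : Fintype.card α - 1 ≤ s.card) :
    s = univ.erase i :=
  eq_of_subset_of_card_le (fun j hj ↦ mem_erase.mpr ⟨ne_of_mem_of_not_mem hj hi, mem_univ j⟩)
    (by rwa [card_erase_of_mem (mem_univ i), card_univ])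

lemma exists_univ_erase_subset [Nonempty α] (hs : Fintype.card α - 1 ≤ s.card) :
    ∃ i, univ.erase i ⊆ s := by
  by_cases h : ∀ i, i ∈ s
  · exact ⟨Classical.arbitrary α, fun j _ ↦ h j⟩
  obtain ⟨i, hi⟩ := not_forall.mp h
  exact ⟨i, (eq_univ_erase_of_notMem hi hs).ge⟩

end Finset

lemma span_image_prod_X_eq_span_range_prod_erase {R σ : Type*} [CommRing R] [Fintype σ]
    [DecidableEq σ] [Nonempty σ] {S : Set (Finset σ)}
    (hcard : ∀ s ∈ S, Fintype.card σ - 1 ≤ s.card) (hS : ∀ i, ∃ s ∈ S, i ∉ s) :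
    span ((fun s ↦ ∏ j ∈ s, (X j : MvPolynomial σ R)) '' S) =
      span (Set.range fun i ↦ ∏ j ∈ Finset.univ.erase i, X j) := by
  change _ = span (Set.range ((fun s ↦ ∏ j ∈ s, X j) ∘ (Finset.univ.erase ·)))
  rw [Set.range_comp]
  refine span_image_prod_X_eq_of_subset ?_ fun s hs ↦ ?_
  · rintro _ ⟨i, rfl⟩
    obtain ⟨s, hs, hi⟩ := hS i
    show Finset.univ.erase i ∈ S
    exact Finset.eq_univ_erase_of_notMem hi (hcard s hs) ▸ hs
  · obtain ⟨i, hi⟩ := Finset.exists_univ_erase_subset (hcard s hs)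
    exact ⟨_, ⟨i, rfl⟩, hi⟩

lemma range_prod_X_erase_fin_three (K : Type*) [CommRing K] :
    Set.range (fun i : Fin 3 ↦ ∏ j ∈ Finset.univ.erase i, (X j : MvPolynomial (Fin 3) K)) =
      {X 0 * X 1, X 0 * X 2, X 1 * X 2} := by
  have e0 : Finset.univ.erase (0 : Fin 3) = {1, 2} := by decide
  have e1 : Finset.univ.erase (1 : Fin 3) = {0, 2} := by decide
  have e2 : Finset.univ.erase (2 : Fin 3) = {0, 1} := by decide
  ext p
  simp [Fin.exists_fin_succ, e0, e1, e2, eq_comm (b := p), or_comm, or_assoc]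

theorem stmt11_general (K : Type*) [Field K] (I : Ideal (MvPolynomial (Fin 3) K))
    (hsqf : IsSqfreeMonomialIdeal I) (hht : idealHeight I = 2)
    (hindeg : ∀ i : Fin 3, X i ∉ I) :
    I = Ideal.span {(X 0 * X 1 : MvPolynomial (Fin 3) K), X 0 * X 2, X 1 * X 2} ∧
      ara I = 2 := by
  have hne : I ≠ ⊤ := fun h ↦ hindeg 0 (h ▸ Submodule.mem_top)
  obtain ⟨S, rfl⟩ := hsqf
  have hcard : ∀ s ∈ S, Fintype.card (Fin 3) - 1 ≤ s.card := fun s hs ↦ by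
    rw [Fintype.card_fin]
    exact one_lt_card_of_prod_X_mem hindeg
      (subset_span (Set.mem_image_of_mem (fun t ↦ ∏ j ∈ t, X j) hs))
  have hS : ∀ i, ∃ s ∈ S, i ∉ s := fun i ↦ by
    by_contra! h
    have := idealHeight_le_one_of_le_span_singleton X_prime
      (span_image_prod_X_le_span_X (R := K) (i := i) h)
    simp [hht] at this
  have hI := (span_image_prod_X_eq_span_range_prod_erase hcard hS).trans
    (congrArg span (range_prod_X_erase_fin_three K))
  refine ⟨hI, ara_eq_of_radical_span_eq hne hht ![X 0 * X 1, X 0 * X 2 + X 1 * X 2] ?_⟩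
  rw [hI, Matrix.range_cons_cons_empty, radical_span_pair_eq_radical_span_triple]

/-- In three variables, a height-2 Cohen--Macaulay squarefree monomial ideal with
`indeg I ≥ 2` is `(x₁x₂, x₁x₃, x₂x₃)`, and `ara I = 2`. -/
theorem stmt11 (K : Type*) [Field K] (I : Ideal (MvPolynomial (Fin 3) K))
    (hsqf : IsSqfreeMonomialIdeal I) (hht : idealHeight I = 2) (hcm : QuotIsCM I)
    (hindeg : ∀ i : Fin 3, X i ∉ I) :
    I = Ideal.span {(X 0 * X 1 : MvPolynomial (Fin 3) K), X 0 * X 2, X 1 * X 2} ∧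
      ara I = 2 :=
  stmt11_general K I hsqf hht hindeg
end
end

section
/- For n ≥ 4, let Iₙ ⊂ K[x₁,...,xₙ] be generated by the n−1 monomials m_i^(n) = (x₁⋯xₙ)/(x_{n−i}x_{n−i+1}) for i = 1,...,n−1. Define q₁^(4) = m₂^(4), q₂^(4) = m₁^(4) + m₃^(4), q_j^(5) = x₅q_j^(4) − c_j m₁^(5) (with c₁ = x₁x₂, c₂ = x₂x₃), and recursively q_j^(n+1) = x_{n+1}q_j^(n) − x_{n−2}^{n−3} q_j^(n−1) m₁^(n+1) for n ≥ 5, j = 1,2. Then √((q₁^(n), q₂^(n))) = √(Iₙ) for all n ≥ 4. -/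
/-!
Every prime `P` containing `q₁⁽ⁿ⁾` and `q₂⁽ⁿ⁾` contains `Iₙ`, by induction on `n`. The Wronskian
`q₁⁽ⁿ⁺¹⁾q₂⁽ⁿ⁾ - q₂⁽ⁿ⁺¹⁾q₁⁽ⁿ⁾` lies in `P`, and the recursion shows that it is, up to sign, a
monomial in `x₁, …, x_{n-1}`; hence `P` contains `m₁⁽ⁿ⁺¹⁾ = x₁⋯x_{n-1}`. If `x_{n+1} ∈ P`, then
`P` contains the other generators `mᵢ⁽ⁿ⁺¹⁾ = x_{n+1} m_{i-1}⁽ⁿ⁾`; otherwise the recursion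
`q_j⁽ⁿ⁺¹⁾ = x_{n+1} q_j⁽ⁿ⁾ - a_j m₁⁽ⁿ⁺¹⁾` puts `q_j⁽ⁿ⁾` in `P` and the induction hypothesis
applies. The same recursion keeps `q_j⁽ⁿ⁾` inside `Iₙ`, which gives the other inclusion.
-/

set_option synthInstance.maxHeartbeats 1000000
set_option maxHeartbeats 1000000

open MvPolynomial Ideal CategoryTheory

noncomputable section

/-- `m_i^{(n)} = (x₁⋯xₙ)/(x_{n-i}x_{n-i+1})`, as a polynomial in `K[x₁, x₂, …]`. -/
def mgen (K : Type*) [Field K] (i n : ℕ) : MvPolynomial ℕ K :=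
  ∏ k ∈ Finset.Icc 1 n \ {n - i, n - i + 1}, X k

/-- The ideal `Iₙ = (m₁^{(n)}, …, m_{n-1}^{(n)})`. -/
def In (K : Type*) [Field K] (n : ℕ) : Ideal (MvPolynomial ℕ K) :=
  Ideal.span {p | ∃ i, 1 ≤ i ∧ i ≤ n - 1 ∧ p = mgen K i n}

/-- The recursively defined first generator `q₁^{(n)}`. -/
def q1 (K : Type*) [Field K] : ℕ → MvPolynomial ℕ K
  | 4 => mgen K 2 4
  | 5 => X 5 * mgen K 2 4 - X 1 * X 2 * mgen K 1 5
  | (n + 6) => X (n + 6) * q1 K (n + 5) - X (n + 3) ^ (n + 2) * q1 K (n + 4) * mgen K 1 (n + 6)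
  | _ => 0

/-- The recursively defined second generator `q₂^{(n)}`. -/
def q2 (K : Type*) [Field K] : ℕ → MvPolynomial ℕ K
  | 4 => mgen K 1 4 + mgen K 3 4
  | 5 => X 5 * (mgen K 1 4 + mgen K 3 4) - X 2 * X 3 * mgen K 1 5
  | (n + 6) => X (n + 6) * q2 K (n + 5) - X (n + 3) ^ (n + 2) * q2 K (n + 4) * mgen K 1 (n + 6)
  | _ => 0

lemma Ideal.IsPrime.mem_of_mul_sub_mul_mem {R : Type*} [CommRing R] {P : Ideal R}
    (hP : P.IsPrime) {x q a m : R} (hx : x ∉ P) (hm : m ∈ P) (h : x * q - a * m ∈ P) :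
    q ∈ P := by
  have hxq : x * q ∈ P := by simpa only [sub_add_cancel] using add_mem h (P.mul_mem_left a hm)
  exact (hP.mem_or_mem hxq).resolve_left hx

lemma Ideal.IsPrime.mem_and_mem_of_add_mem_of_mul_mem {R : Type*} [CommRing R] {P : Ideal R}
    (hP : P.IsPrime) {a b : R} (hadd : a + b ∈ P) (hmul : a * b ∈ P) : a ∈ P ∧ b ∈ P := by
  rcases hP.mem_or_mem hmul with ha | hb
  · exact ⟨ha, (P.add_mem_iff_right ha).mp hadd⟩
  · exact ⟨(P.add_mem_iff_left hb).mp hadd, hb⟩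

section Monomials

variable (K : Type*) [Field K]

lemma mgen_one_eq_prod (n : ℕ) : mgen K 1 n = ∏ k ∈ Finset.Icc 1 (n - 2), X k := by
  rw [mgen]
  congr 1
  ext k
  simp only [Finset.mem_sdiff, Finset.mem_Icc, Finset.mem_insert, Finset.mem_singleton]
  omega

lemma mgen_succ_succ {i n : ℕ} (hi : 1 ≤ i) (hn : 1 ≤ n) :
    mgen K (i + 1) (n + 1) = X (n + 1) * mgen K i n := by
  have hset : Finset.Icc 1 (n + 1) \ {n + 1 - (i + 1), n + 1 - (i + 1) + 1}
      = insert (n + 1) (Finset.Icc 1 n \ {n - i, n - i + 1}) := by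
    ext k
    simp only [Finset.mem_sdiff, Finset.mem_Icc, Finset.mem_insert, Finset.mem_singleton]
    omega
  rw [mgen, mgen, hset, Finset.prod_insert (by simp)]

lemma X_dvd_mgen_one {k n : ℕ} (hk1 : 1 ≤ k) (hkn : k + 2 ≤ n) : X k ∣ mgen K 1 n := by
  rw [mgen_one_eq_prod]
  exact Finset.dvd_prod_of_mem _ (Finset.mem_Icc.mpr ⟨hk1, by omega⟩)

lemma mgen_one_dvd_mgen_one_succ (n : ℕ) : mgen K 1 n ∣ mgen K 1 (n + 1) := by
  rw [mgen_one_eq_prod, mgen_one_eq_prod]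
  exact Finset.prod_dvd_prod_of_subset _ _ _ (Finset.Icc_subset_Icc le_rfl (by omega))

lemma mgen_one_four : mgen K 1 4 = X 1 * X 2 := by
  simp [mgen_one_eq_prod, Finset.prod_Icc_succ_top]

lemma mgen_two_four : mgen K 2 4 = X 1 * X 4 := by
  rw [mgen_succ_succ K le_rfl (by norm_num)]
  simp [mgen_one_eq_prod, mul_comm]

lemma mgen_three_four : mgen K 3 4 = X 3 * X 4 := by
  rw [mgen_succ_succ K (by norm_num) (by norm_num), mgen_succ_succ K le_rfl (by norm_num)]
  simp [mgen_one_eq_prod, mul_comm]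

end Monomials

section Generators

variable (K : Type*) [Field K]

lemma q1_succ_eq {n : ℕ} (hn : 4 ≤ n) :
    ∃ a, q1 K (n + 1) = X (n + 1) * q1 K n - a * mgen K 1 (n + 1) := by
  obtain ⟨m, rfl⟩ := Nat.exists_eq_add_of_le' hn
  cases m with
  | zero => exact ⟨X 1 * X 2, rfl⟩
  | succ m => exact ⟨X (m + 3) ^ (m + 2) * q1 K (m + 4), by rw [q1]⟩

lemma q2_succ_eq {n : ℕ} (hn : 4 ≤ n) :
    ∃ a, q2 K (n + 1) = X (n + 1) * q2 K n - a * mgen K 1 (n + 1) := by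
  obtain ⟨m, rfl⟩ := Nat.exists_eq_add_of_le' hn
  cases m with
  | zero => exact ⟨X 2 * X 3, rfl⟩
  | succ m => exact ⟨X (m + 3) ^ (m + 2) * q2 K (m + 4), by rw [q2]⟩

def wronskian (n : ℕ) : MvPolynomial ℕ K :=
  q1 K (n + 1) * q2 K n - q2 K (n + 1) * q1 K n

lemma wronskian_four : wronskian K 4 = -(X 1 ^ 2 * X 2 ^ 2 * mgen K 1 5) := by
  simp only [wronskian, q1, q2, mgen_one_four, mgen_two_four, mgen_three_four]
  ring

lemma wronskian_succ (n : ℕ) :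
    wronskian K (n + 5) = X (n + 3) ^ (n + 2) * mgen K 1 (n + 6) * wronskian K (n + 4) := by
  simp only [wronskian, q1, q2]
  ring

lemma mgen_one_mem_of_wronskian_mem {P : Ideal (MvPolynomial ℕ K)} (hP : P.IsPrime) (n : ℕ)
    (hW : wronskian K (n + 4) ∈ P) : mgen K 1 (n + 5) ∈ P := by
  induction n with
  | zero =>
    rw [wronskian_four, neg_mem_iff] at hW
    rcases hP.mem_or_mem hW with hW | hm
    · rcases hP.mem_or_mem hW with h1 | h2
      · exact P.mem_of_dvd (X_dvd_mgen_one K le_rfl (by norm_num)) (hP.mem_of_pow_mem _ h1)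
      · exact P.mem_of_dvd (X_dvd_mgen_one K (by norm_num) (by norm_num)) (hP.mem_of_pow_mem _ h2)
    · exact hm
  | succ n ih =>
    rw [wronskian_succ] at hW
    rcases hP.mem_or_mem hW with hW | hW
    · rcases hP.mem_or_mem hW with hx | hm
      · exact P.mem_of_dvd (X_dvd_mgen_one K (by omega) (by omega)) (hP.mem_of_pow_mem _ hx)
      · exact hm
    · exact P.mem_of_dvd (mgen_one_dvd_mgen_one_succ K _) (ih hW)

end Generators

section Radical

variable (K : Type*) [Field K]

lemma mgen_mem_In {i n : ℕ} (hi1 : 1 ≤ i) (hin : i ≤ n - 1) : mgen K i n ∈ In K n :=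
  Ideal.subset_span ⟨i, hi1, hin, rfl⟩

lemma X_mul_mem_In {n : ℕ} (hn : 1 ≤ n) {p : MvPolynomial ℕ K} (hp : p ∈ In K n) :
    X (n + 1) * p ∈ In K (n + 1) := by
  have hle : In K n ≤ (In K (n + 1)).colon {X (n + 1)} := by
    rw [In, Ideal.span_le]
    rintro _ ⟨i, hi1, hin, rfl⟩
    rw [SetLike.mem_coe, Submodule.mem_colon_singleton, smul_eq_mul, mul_comm,
      ← mgen_succ_succ K hi1 hn]
    exact mgen_mem_In K (by omega) (by omega)
  simpa only [Submodule.mem_colon_singleton, smul_eq_mul, mul_comm] using hle hp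

lemma span_q_le_In {n : ℕ} (hn : 4 ≤ n) : Ideal.span {q1 K n, q2 K n} ≤ In K n := by
  rw [Ideal.span_le, Set.insert_subset_iff, Set.singleton_subset_iff]
  induction n, hn using Nat.le_induction with
  | base =>
    exact ⟨mgen_mem_In K (by norm_num) (by norm_num),
      add_mem (mgen_mem_In K le_rfl (by norm_num)) (mgen_mem_In K (by norm_num) (by norm_num))⟩
  | succ n hn ih =>
    obtain ⟨a₁, h₁⟩ := q1_succ_eq K hn
    obtain ⟨a₂, h₂⟩ := q2_succ_eq K hn
    have hm : mgen K 1 (n + 1) ∈ In K (n + 1) := mgen_mem_In K le_rfl (by omega)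
    rw [SetLike.mem_coe, SetLike.mem_coe, h₁, h₂]
    exact ⟨sub_mem (X_mul_mem_In K (by omega) ih.1) (Ideal.mul_mem_left _ _ hm),
      sub_mem (X_mul_mem_In K (by omega) ih.2) (Ideal.mul_mem_left _ _ hm)⟩

variable {K} {P : Ideal (MvPolynomial ℕ K)}

lemma mgen_four_mem (hP : P.IsPrime) (h1 : q1 K 4 ∈ P) (h2 : q2 K 4 ∈ P) {i : ℕ}
    (hi1 : 1 ≤ i) (hi : i ≤ 3) : mgen K i 4 ∈ P := by
  have hmul : mgen K 1 4 * mgen K 3 4 = X 2 * X 3 * q1 K 4 := by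
    simp only [q1, mgen_one_four, mgen_two_four, mgen_three_four]
    ring
  obtain ⟨h14, h34⟩ := hP.mem_and_mem_of_add_mem_of_mul_mem h2 (hmul ▸ P.mul_mem_left _ h1)
  interval_cases i
  exacts [h14, h1, h34]

lemma mgen_mem_of_q_mem (hP : P.IsPrime) {n : ℕ} (hn : 4 ≤ n) (h1 : q1 K n ∈ P)
    (h2 : q2 K n ∈ P) {i : ℕ} (hi1 : 1 ≤ i) (hin : i ≤ n - 1) : mgen K i n ∈ P := by
  induction n, hn using Nat.le_induction generalizing i with
  | base => exact mgen_four_mem hP h1 h2 hi1 hin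
  | succ n hn ih =>
    have hm : mgen K 1 (n + 1) ∈ P := by
      obtain ⟨m, rfl⟩ := Nat.exists_eq_add_of_le' hn
      exact mgen_one_mem_of_wronskian_mem K hP m
        (sub_mem (P.mul_mem_right _ h1) (P.mul_mem_right _ h2))
    obtain ⟨j, rfl⟩ := Nat.exists_eq_add_of_le' hi1
    rcases j.eq_zero_or_pos with rfl | hj
    · exact hm
    rw [mgen_succ_succ K hj (by omega)]
    by_cases hx : X (n + 1) ∈ P
    · exact P.mul_mem_right _ hx
    obtain ⟨a₁, h₁⟩ := q1_succ_eq K hn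
    obtain ⟨a₂, h₂⟩ := q2_succ_eq K hn
    refine P.mul_mem_left _ (ih ?_ ?_ hj (by omega))
    · exact hP.mem_of_mul_sub_mul_mem hx hm (h₁ ▸ h1)
    · exact hP.mem_of_mul_sub_mul_mem hx hm (h₂ ▸ h2)

lemma In_le_of_span_q_le (hP : P.IsPrime) {n : ℕ} (hn : 4 ≤ n)
    (hle : Ideal.span {q1 K n, q2 K n} ≤ P) : In K n ≤ P := by
  rw [In, Ideal.span_le]
  rintro _ ⟨i, hi1, hin, rfl⟩
  exact mgen_mem_of_q_mem hP hn (hle (Ideal.subset_span (by simp)))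
    (hle (Ideal.subset_span (by simp))) hi1 hin

end Radical

/-- For every `n ≥ 4`, the two elements `q₁^{(n)}, q₂^{(n)}` generate `Iₙ` up to
radical. -/
theorem stmt13 (K : Type*) [Field K] (n : ℕ) (hn : 4 ≤ n) :
    Ideal.radical (Ideal.span {q1 K n, q2 K n}) = Ideal.radical (In K n) := by
  refine le_antisymm (Ideal.radical_mono (span_q_le_In K hn)) ?_
  rw [Ideal.radical_le_radical_iff, Ideal.radical_eq_sInf]
  exact le_sInf fun P ⟨hle, hP⟩ => In_le_of_span_q_le hP hn hle
end
end

section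
/- Let R be a commutative ring, q₁,...,q_t ∈ R, x₀ a variable, and A₁ = Ā + x₀·Id_t a t×t matrix over R[x₀] where Ā = (ā_ij) with each ā_ij ∈ I for an ideal I ⊇ (q₁,...,q_t), satisfying (q̄₁,...,q̄_t)ᵀ = Ā·(x₁,...,x_t)ᵀ with q̄_i = Σ_j ā_ij x_j. Set J₁ = (det A₁ − x₀ᵗ, q̄₁ + x₀x₁, ..., q̄_t + x₀x_t). Then x₀x_j ∈ √J₁ and q̄_j ∈ √J₁ for all j = 1,...,t. -/
set_option synthInstance.maxHeartbeats 1000000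
set_option maxHeartbeats 1000000

open MvPolynomial Ideal CategoryTheory

noncomputable section

open Polynomial in
/-- Case 1 of the proof of the Barile--Terai theorem, via the adjugate matrix:
with `A₁ = Ā + x₀·Id` and `J₁ = (det A₁ - x₀ᵗ, q̄₁ + x₀x₁, …, q̄_t + x₀x_t)`,
each `x₀x_j` and each `q̄_j` lies in `√J₁`. -/
theorem stmt15 {R : Type*} [CommRing R] (t : ℕ)
    (abar : Matrix (Fin t) (Fin t) R) (xv : Fin t → R)
    (I : Ideal R) (hab : ∀ i j, abar i j ∈ I)
    (qbar : Fin t → R) (hqbar : ∀ i, qbar i = ∑ j, abar i j * xv j)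
    (hqI : Ideal.span (Set.range qbar) ≤ I)
    (A₁ : Matrix (Fin t) (Fin t) (Polynomial R))
    (hA₁ : A₁ = abar.map Polynomial.C + (Polynomial.X : Polynomial R) • 1)
    (J₁ : Ideal (Polynomial R))
    (hJ₁ : J₁ = Ideal.span ({A₁.det - Polynomial.X ^ t} ∪
      Set.range fun i => Polynomial.C (qbar i) +
        (Polynomial.X : Polynomial R) * Polynomial.C (xv i))) :
    ∀ j : Fin t,
      (Polynomial.X : Polynomial R) * Polynomial.C (xv j) ∈ Ideal.radical J₁ ∧
      Polynomial.C (qbar j) ∈ Ideal.radical J₁ := by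
  intro j
  have hv : ∀ i, Polynomial.C (qbar i) + Polynomial.X * Polynomial.C (xv i) ∈ J₁ := by
    intro i
    rw [hJ₁]
    exact Ideal.subset_span (Or.inr ⟨i, rfl⟩)
  have hdet : A₁.det - Polynomial.X ^ t ∈ J₁ := by
    rw [hJ₁]; exact Ideal.subset_span (Or.inl rfl)
  have hmul : A₁.mulVec (fun i => Polynomial.C (xv i)) =
      fun i => Polynomial.C (qbar i) + Polynomial.X * Polynomial.C (xv i) := by
    funext i
    simp only [hA₁, Matrix.mulVec, dotProduct, Matrix.add_apply, Matrix.map_apply,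
      Matrix.smul_apply, Matrix.one_apply, smul_eq_mul, add_mul, Finset.sum_add_distrib,
      hqbar, map_sum, _root_.map_mul, mul_ite, mul_one, mul_zero, ite_mul, zero_mul,
      Finset.sum_ite_eq, Finset.mem_univ, if_pos]
  have hkey : A₁.det * Polynomial.C (xv j) ∈ J₁ := by
    have h2 : A₁.adjugate.mulVec (A₁.mulVec (fun i => Polynomial.C (xv i))) =
        A₁.det • (fun i => Polynomial.C (xv i)) := by
      rw [Matrix.mulVec_mulVec, Matrix.adjugate_mul, Matrix.smul_mulVec,
        Matrix.one_mulVec]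
    rw [hmul] at h2
    have h3 := congrFun h2 j
    simp only [Pi.smul_apply, smul_eq_mul, Matrix.mulVec, dotProduct] at h3
    rw [← h3]
    exact Ideal.sum_mem _ fun i _ => Ideal.mul_mem_left _ _ (hv i)
  have hXt : Polynomial.X ^ t * Polynomial.C (xv j) ∈ J₁ := by
    have : Polynomial.X ^ t * Polynomial.C (xv j) =
        A₁.det * Polynomial.C (xv j) - (A₁.det - Polynomial.X ^ t) * Polynomial.C (xv j) := by
      ring
    rw [this]
    exact Ideal.sub_mem _ hkey (Ideal.mul_mem_right _ _ hdet)
  have hrad : Polynomial.X * Polynomial.C (xv j) ∈ Ideal.radical J₁ := by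
    refine ⟨t, ?_⟩
    have ht : t ≠ 0 := (Fin.pos j).ne'
    obtain ⟨s, rfl⟩ := Nat.exists_eq_succ_of_ne_zero ht
    have : (Polynomial.X * Polynomial.C (xv j)) ^ (s + 1) =
        (Polynomial.X ^ (s + 1) * Polynomial.C (xv j)) * Polynomial.C (xv j) ^ s := by
      ring
    rw [this]
    exact Ideal.mul_mem_right _ _ hXt
  refine ⟨hrad, ?_⟩
  have : Polynomial.C (qbar j) =
      (Polynomial.C (qbar j) + Polynomial.X * Polynomial.C (xv j)) -
        Polynomial.X * Polynomial.C (xv j) := by ring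
  rw [this]
  exact Ideal.sub_mem _ (Ideal.le_radical (hv j)) hrad
end
end

section
/- In K[x₀,x₁,x₂,x₃,x₄], let I' = (x₁x₃, x₂x₄, x₀x₁, x₀x₂, x₀x₃). Then the three elements f = (x₁x₃² + x₀)(x₂x₄² + x₀)(x₀ + x₃) − x₀³, g = x₁²x₃² + x₀x₁, h = x₂²x₄² + x₀x₂ generate I' up to radical: √((f,g,h)) = I'. -/
set_option synthInstance.maxHeartbeats 1000000
set_option maxHeartbeats 1000000

open MvPolynomial Ideal CategoryTheory

noncomputable section

/-- Subtracting the evaluation that kills the variables in `S` lands in the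
ideal generated by the variables in `S`. -/
lemma sub_aeval_mem_aux {K : Type*} [CommRing K] (S : Set (Fin 5)) [DecidablePred (· ∈ S)]
    (p : MvPolynomial (Fin 5) K) :
    p - aeval (fun i => if i ∈ S then 0 else X i) p ∈
      Ideal.span (MvPolynomial.X '' S : Set (MvPolynomial (Fin 5) K)) := by
  induction p using MvPolynomial.induction_on with
  | C a => simp
  | add p q hp hq =>
      have : (p + q) - aeval (fun i => if i ∈ S then 0 else X i) (p + q)
          = (p - aeval (fun i => if i ∈ S then 0 else X i) p)
            + (q - aeval (fun i => if i ∈ S then 0 else X i) q) := by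
        rw [map_add]; ring
      rw [this]; exact add_mem hp hq
  | mul_X p i hp =>
      have : (p * X i) - aeval (fun i => if i ∈ S then 0 else X i) (p * X i)
          = (p - aeval (fun i => if i ∈ S then 0 else X i) p) * X i
            + (aeval (fun i => if i ∈ S then 0 else X i) p) *
              (X i - (if i ∈ S then 0 else X i)) := by
        rw [_root_.map_mul, aeval_X]; ring
      rw [this]
      refine add_mem (Ideal.mul_mem_right _ _ hp) ?_
      by_cases hi : i ∈ S
      · simp only [hi, if_pos, sub_zero]
        exact Ideal.mul_mem_left _ _ (Ideal.subset_span ⟨i, hi, rfl⟩)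
      · simp [hi]

/-- An ideal generated by a set of variables is radical. -/
lemma span_X_isRadical_aux (K : Type*) [Field K] (S : Set (Fin 5)) [DecidablePred (· ∈ S)] :
    (Ideal.span (MvPolynomial.X '' S : Set (MvPolynomial (Fin 5) K))).IsRadical := by
  intro p hp
  obtain ⟨n, hn⟩ := hp
  have hker : ∀ q ∈ Ideal.span (MvPolynomial.X '' S : Set (MvPolynomial (Fin 5) K)),
      aeval (fun i => if i ∈ S then (0 : MvPolynomial (Fin 5) K) else X i) q = 0 := by
    intro q hq
    have hle : Ideal.span (MvPolynomial.X '' S : Set (MvPolynomial (Fin 5) K)) ≤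
        RingHom.ker (aeval (fun i => if i ∈ S then (0 : MvPolynomial (Fin 5) K) else X i)) := by
      rw [Ideal.span_le]
      rintro x ⟨i, hi, rfl⟩
      simp [RingHom.mem_ker, hi]
    exact hle hq
  have h1 : (aeval (fun i => if i ∈ S then (0 : MvPolynomial (Fin 5) K) else X i) p) ^ n = 0 := by
    rw [← map_pow]; exact hker _ hn
  have h2 : aeval (fun i => if i ∈ S then (0 : MvPolynomial (Fin 5) K) else X i) p = 0 :=
    IsNilpotent.eq_zero ⟨n, h1⟩
  have h3 := sub_aeval_mem_aux S p
  rw [h2, sub_zero] at h3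
  exact h3

lemma logic_aux {a0 a1 a2 a3 a4 : Prop} (d1 : a0 ∨ a1 ∨ a2) (d2 : a0 ∨ a1 ∨ a4)
    (d3 : a0 ∨ a2 ∨ a3) (d4 : a0 ∨ a3 ∨ a4) (d5 : a1 ∨ a2 ∨ a3) :
    (a1 ∧ a3) ∨ (a2 ∧ a4) ∨ (a0 ∧ a1) ∨ (a0 ∧ a2) ∨ (a0 ∧ a3) := by tauto

lemma pair_le_aux {m : Fin 5 →₀ ℕ} {i j : Fin 5} (hij : i ≠ j) (hi : m i ≠ 0) (hj : m j ≠ 0) :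
    Finsupp.single i 1 + Finsupp.single j 1 ≤ m := by
  rw [Finsupp.le_def]
  intro k
  rw [Finsupp.add_apply, Finsupp.single_apply, Finsupp.single_apply]
  by_cases h1 : i = k <;> by_cases h2 : j = k <;>
    simp_all <;> omega

lemma span_eq_monomial_span_aux (K : Type*) [Field K] :
    Ideal.span {(X 1 * X 3 : MvPolynomial (Fin 5) K), X 2 * X 4,
        X 0 * X 1, X 0 * X 2, X 0 * X 3} =
      Ideal.span ((fun s => monomial s (1 : K)) ''
        {Finsupp.single 1 1 + Finsupp.single 3 1, Finsupp.single 2 1 + Finsupp.single 4 1,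
         Finsupp.single 0 1 + Finsupp.single 1 1, Finsupp.single 0 1 + Finsupp.single 2 1,
         Finsupp.single 0 1 + Finsupp.single 3 1}) := by
  congr 1
  rw [Set.image_insert_eq, Set.image_insert_eq, Set.image_insert_eq, Set.image_insert_eq,
    Set.image_singleton]
  have hmono : ∀ i j : Fin 5, (monomial (Finsupp.single i 1 + Finsupp.single j 1) (1 : K))
      = X i * X j := by
    intro i j
    rw [show (1 : K) = 1 * 1 by ring, ← monomial_mul]
    rfl
  rw [hmono, hmono, hmono, hmono, hmono]

/-- In `K[x₀,…,x₄]`, the three listed elements generate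
`I' = (x₁x₃, x₂x₄, x₀x₁, x₀x₂, x₀x₃)` up to radical. -/
theorem stmt16 (K : Type*) [Field K] :
    Ideal.radical (Ideal.span
        {((X 1 * X 3 ^ 2 + X 0) * (X 2 * X 4 ^ 2 + X 0) * (X 0 + X 3) - X 0 ^ 3 :
            MvPolynomial (Fin 5) K),
         X 1 ^ 2 * X 3 ^ 2 + X 0 * X 1,
         X 2 ^ 2 * X 4 ^ 2 + X 0 * X 2}) =
      Ideal.span {(X 1 * X 3 : MvPolynomial (Fin 5) K), X 2 * X 4,
        X 0 * X 1, X 0 * X 2, X 0 * X 3} := by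
  classical
  set f : MvPolynomial (Fin 5) K :=
    (X 1 * X 3 ^ 2 + X 0) * (X 2 * X 4 ^ 2 + X 0) * (X 0 + X 3) - X 0 ^ 3 with hf
  set g : MvPolynomial (Fin 5) K := X 1 ^ 2 * X 3 ^ 2 + X 0 * X 1 with hg
  set h : MvPolynomial (Fin 5) K := X 2 ^ 2 * X 4 ^ 2 + X 0 * X 2 with hh
  have hm1 : (X 1 * X 3 : MvPolynomial (Fin 5) K) ∈
      Ideal.span {(X 1 * X 3 : MvPolynomial (Fin 5) K), X 2 * X 4, X 0 * X 1, X 0 * X 2,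
        X 0 * X 3} := subset_span (by simp)
  have hm2 : (X 2 * X 4 : MvPolynomial (Fin 5) K) ∈
      Ideal.span {(X 1 * X 3 : MvPolynomial (Fin 5) K), X 2 * X 4, X 0 * X 1, X 0 * X 2,
        X 0 * X 3} := subset_span (by simp)
  have hm3 : (X 0 * X 1 : MvPolynomial (Fin 5) K) ∈
      Ideal.span {(X 1 * X 3 : MvPolynomial (Fin 5) K), X 2 * X 4, X 0 * X 1, X 0 * X 2,
        X 0 * X 3} := subset_span (by simp)
  have hm4 : (X 0 * X 2 : MvPolynomial (Fin 5) K) ∈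
      Ideal.span {(X 1 * X 3 : MvPolynomial (Fin 5) K), X 2 * X 4, X 0 * X 1, X 0 * X 2,
        X 0 * X 3} := subset_span (by simp)
  have hm5 : (X 0 * X 3 : MvPolynomial (Fin 5) K) ∈
      Ideal.span {(X 1 * X 3 : MvPolynomial (Fin 5) K), X 2 * X 4, X 0 * X 1, X 0 * X 2,
        X 0 * X 3} := subset_span (by simp)
  have hfJ : f ∈ Ideal.span {f, g, h} := subset_span (by simp)
  have hgJ : g ∈ Ideal.span {f, g, h} := subset_span (by simp)
  have hhJ : h ∈ Ideal.span {f, g, h} := subset_span (by simp)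
  -- J is contained in I
  have hJI : Ideal.span {f, g, h} ≤
      Ideal.span {(X 1 * X 3 : MvPolynomial (Fin 5) K), X 2 * X 4, X 0 * X 1, X 0 * X 2,
        X 0 * X 3} := by
    rw [Ideal.span_le]
    rintro x hx
    simp only [Set.mem_insert_iff, Set.mem_singleton_iff] at hx
    rcases hx with rfl | rfl | rfl
    · have e : f = (X 1 * X 3) * (X 0 * X 2 * X 3 * X 4 ^ 2 + X 2 * X 3 ^ 2 * X 4 ^ 2)
          + (X 0 * X 1) * (X 0 * X 3 ^ 2 + X 3 ^ 3)
          + (X 0 * X 2) * (X 0 * X 4 ^ 2 + X 3 * X 4 ^ 2)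
          + (X 0 * X 3) * X 0 := by rw [hf]; ring
      rw [e]
      exact add_mem (add_mem (add_mem (Ideal.mul_mem_right _ _ hm1)
        (Ideal.mul_mem_right _ _ hm3)) (Ideal.mul_mem_right _ _ hm4))
        (Ideal.mul_mem_right _ _ hm5)
    · have e : g = (X 1 * X 3) * (X 1 * X 3) + (X 0 * X 1) * 1 := by rw [hg]; ring
      rw [e]
      exact add_mem (Ideal.mul_mem_right _ _ hm1) (Ideal.mul_mem_right _ _ hm3)
    · have e : h = (X 2 * X 4) * (X 2 * X 4) + (X 0 * X 2) * 1 := by rw [hh]; ring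
      rw [e]
      exact add_mem (Ideal.mul_mem_right _ _ hm2) (Ideal.mul_mem_right _ _ hm4)
  refine le_antisymm ?_ ?_
  · -- radical J ≤ I
    have key : ∀ S : Set (Fin 5),
        Ideal.span {(X 1 * X 3 : MvPolynomial (Fin 5) K), X 2 * X 4, X 0 * X 1, X 0 * X 2,
          X 0 * X 3} ≤ Ideal.span (MvPolynomial.X '' S) →
        (Ideal.span {f, g, h}).radical ≤ Ideal.span (MvPolynomial.X '' S) := by
      intro S hS
      exact (span_X_isRadical_aux K S).radical_le_iff.2 (hJI.trans hS)
    have hvar : ∀ (a : Fin 5) (S : Set (Fin 5)), a ∈ S →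
        (X a : MvPolynomial (Fin 5) K) ∈ Ideal.span (MvPolynomial.X '' S) :=
      fun a S ha => subset_span ⟨a, ha, rfl⟩
    have hle1 : Ideal.span {(X 1 * X 3 : MvPolynomial (Fin 5) K), X 2 * X 4, X 0 * X 1,
        X 0 * X 2, X 0 * X 3} ≤
        Ideal.span (MvPolynomial.X '' ({0, 1, 2} : Set (Fin 5))) := by
      rw [Ideal.span_le]
      rintro x hx
      simp only [Set.mem_insert_iff, Set.mem_singleton_iff] at hx
      rcases hx with rfl | rfl | rfl | rfl | rfl
      · exact Ideal.mul_mem_right _ _ (hvar 1 _ (by simp))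
      · exact Ideal.mul_mem_right _ _ (hvar 2 _ (by simp))
      · exact Ideal.mul_mem_right _ _ (hvar 0 _ (by simp))
      · exact Ideal.mul_mem_right _ _ (hvar 0 _ (by simp))
      · exact Ideal.mul_mem_right _ _ (hvar 0 _ (by simp))
    have hle2 : Ideal.span {(X 1 * X 3 : MvPolynomial (Fin 5) K), X 2 * X 4, X 0 * X 1,
        X 0 * X 2, X 0 * X 3} ≤
        Ideal.span (MvPolynomial.X '' ({0, 1, 4} : Set (Fin 5))) := by
      rw [Ideal.span_le]
      rintro x hx
      simp only [Set.mem_insert_iff, Set.mem_singleton_iff] at hx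
      rcases hx with rfl | rfl | rfl | rfl | rfl
      · exact Ideal.mul_mem_right _ _ (hvar 1 _ (by simp))
      · exact Ideal.mul_mem_left _ _ (hvar 4 _ (by simp))
      · exact Ideal.mul_mem_right _ _ (hvar 0 _ (by simp))
      · exact Ideal.mul_mem_right _ _ (hvar 0 _ (by simp))
      · exact Ideal.mul_mem_right _ _ (hvar 0 _ (by simp))
    have hle3 : Ideal.span {(X 1 * X 3 : MvPolynomial (Fin 5) K), X 2 * X 4, X 0 * X 1,
        X 0 * X 2, X 0 * X 3} ≤
        Ideal.span (MvPolynomial.X '' ({0, 2, 3} : Set (Fin 5))) := by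
      rw [Ideal.span_le]
      rintro x hx
      simp only [Set.mem_insert_iff, Set.mem_singleton_iff] at hx
      rcases hx with rfl | rfl | rfl | rfl | rfl
      · exact Ideal.mul_mem_left _ _ (hvar 3 _ (by simp))
      · exact Ideal.mul_mem_right _ _ (hvar 2 _ (by simp))
      · exact Ideal.mul_mem_right _ _ (hvar 0 _ (by simp))
      · exact Ideal.mul_mem_right _ _ (hvar 0 _ (by simp))
      · exact Ideal.mul_mem_right _ _ (hvar 0 _ (by simp))
    have hle4 : Ideal.span {(X 1 * X 3 : MvPolynomial (Fin 5) K), X 2 * X 4, X 0 * X 1,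
        X 0 * X 2, X 0 * X 3} ≤
        Ideal.span (MvPolynomial.X '' ({0, 3, 4} : Set (Fin 5))) := by
      rw [Ideal.span_le]
      rintro x hx
      simp only [Set.mem_insert_iff, Set.mem_singleton_iff] at hx
      rcases hx with rfl | rfl | rfl | rfl | rfl
      · exact Ideal.mul_mem_left _ _ (hvar 3 _ (by simp))
      · exact Ideal.mul_mem_left _ _ (hvar 4 _ (by simp))
      · exact Ideal.mul_mem_right _ _ (hvar 0 _ (by simp))
      · exact Ideal.mul_mem_right _ _ (hvar 0 _ (by simp))
      · exact Ideal.mul_mem_right _ _ (hvar 0 _ (by simp))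
    have hle5 : Ideal.span {(X 1 * X 3 : MvPolynomial (Fin 5) K), X 2 * X 4, X 0 * X 1,
        X 0 * X 2, X 0 * X 3} ≤
        Ideal.span (MvPolynomial.X '' ({1, 2, 3} : Set (Fin 5))) := by
      rw [Ideal.span_le]
      rintro x hx
      simp only [Set.mem_insert_iff, Set.mem_singleton_iff] at hx
      rcases hx with rfl | rfl | rfl | rfl | rfl
      · exact Ideal.mul_mem_right _ _ (hvar 1 _ (by simp))
      · exact Ideal.mul_mem_right _ _ (hvar 2 _ (by simp))
      · exact Ideal.mul_mem_left _ _ (hvar 1 _ (by simp))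
      · exact Ideal.mul_mem_left _ _ (hvar 2 _ (by simp))
      · exact Ideal.mul_mem_left _ _ (hvar 3 _ (by simp))
    intro p hp
    have h1 := key _ hle1 hp
    have h2 := key _ hle2 hp
    have h3 := key _ hle3 hp
    have h4 := key _ hle4 hp
    have h5 := key _ hle5 hp
    rw [mem_ideal_span_X_image] at h1 h2 h3 h4 h5
    rw [span_eq_monomial_span_aux, mem_ideal_span_monomial_image]
    intro m hm
    have d1 : m 0 ≠ 0 ∨ m 1 ≠ 0 ∨ m 2 ≠ 0 := by
      obtain ⟨i, hi, hne⟩ := h1 m hm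
      simp only [Set.mem_insert_iff, Set.mem_singleton_iff] at hi
      rcases hi with rfl | rfl | rfl
      · exact Or.inl hne
      · exact Or.inr (Or.inl hne)
      · exact Or.inr (Or.inr hne)
    have d2 : m 0 ≠ 0 ∨ m 1 ≠ 0 ∨ m 4 ≠ 0 := by
      obtain ⟨i, hi, hne⟩ := h2 m hm
      simp only [Set.mem_insert_iff, Set.mem_singleton_iff] at hi
      rcases hi with rfl | rfl | rfl
      · exact Or.inl hne
      · exact Or.inr (Or.inl hne)
      · exact Or.inr (Or.inr hne)
    have d3 : m 0 ≠ 0 ∨ m 2 ≠ 0 ∨ m 3 ≠ 0 := by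
      obtain ⟨i, hi, hne⟩ := h3 m hm
      simp only [Set.mem_insert_iff, Set.mem_singleton_iff] at hi
      rcases hi with rfl | rfl | rfl
      · exact Or.inl hne
      · exact Or.inr (Or.inl hne)
      · exact Or.inr (Or.inr hne)
    have d4 : m 0 ≠ 0 ∨ m 3 ≠ 0 ∨ m 4 ≠ 0 := by
      obtain ⟨i, hi, hne⟩ := h4 m hm
      simp only [Set.mem_insert_iff, Set.mem_singleton_iff] at hi
      rcases hi with rfl | rfl | rfl
      · exact Or.inl hne
      · exact Or.inr (Or.inl hne)
      · exact Or.inr (Or.inr hne)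
    have d5 : m 1 ≠ 0 ∨ m 2 ≠ 0 ∨ m 3 ≠ 0 := by
      obtain ⟨i, hi, hne⟩ := h5 m hm
      simp only [Set.mem_insert_iff, Set.mem_singleton_iff] at hi
      rcases hi with rfl | rfl | rfl
      · exact Or.inl hne
      · exact Or.inr (Or.inl hne)
      · exact Or.inr (Or.inr hne)
    have main : (m 1 ≠ 0 ∧ m 3 ≠ 0) ∨ (m 2 ≠ 0 ∧ m 4 ≠ 0) ∨ (m 0 ≠ 0 ∧ m 1 ≠ 0) ∨
        (m 0 ≠ 0 ∧ m 2 ≠ 0) ∨ (m 0 ≠ 0 ∧ m 3 ≠ 0) := logic_aux d1 d2 d3 d4 d5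
    rcases main with hc | hc | hc | hc | hc
    · exact ⟨Finsupp.single 1 1 + Finsupp.single 3 1, by simp,
        pair_le_aux (by decide) hc.1 hc.2⟩
    · exact ⟨Finsupp.single 2 1 + Finsupp.single 4 1, by simp,
        pair_le_aux (by decide) hc.1 hc.2⟩
    · exact ⟨Finsupp.single 0 1 + Finsupp.single 1 1, by simp,
        pair_le_aux (by decide) hc.1 hc.2⟩
    · exact ⟨Finsupp.single 0 1 + Finsupp.single 2 1, by simp,
        pair_le_aux (by decide) hc.1 hc.2⟩
    · exact ⟨Finsupp.single 0 1 + Finsupp.single 3 1, by simp,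
        pair_le_aux (by decide) hc.1 hc.2⟩
  · -- I ≤ radical J
    rw [Ideal.span_le]
    rintro x hx
    simp only [Set.mem_insert_iff, Set.mem_singleton_iff] at hx
    rcases hx with rfl | rfl | rfl | rfl | rfl
    · refine ⟨7, ?_⟩
      have e : (X 1 * X 3 : MvPolynomial (Fin 5) K) ^ 7 =
          (X 1 ^ 3 * (X 1 * X 3)) * f +
          ((X 1 * X 3) * (g ^ 2 - 3 * g * (X 0 * X 1) + 3 * X 0 ^ 2 * X 1 ^ 2)
            - X 1 ^ 3 * X 3 * (X 2 * X 4 ^ 2 + X 0) * (X 0 + X 3)) * g := by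
        rw [hf, hg]; ring
      rw [e]
      exact add_mem (Ideal.mul_mem_left _ _ hfJ) (Ideal.mul_mem_left _ _ hgJ)
    · refine ⟨7, ?_⟩
      have e : (X 2 * X 4 : MvPolynomial (Fin 5) K) ^ 7 =
          (X 2 ^ 3 * (X 2 * X 4)) * f +
          ((X 2 * X 4) * (h ^ 2 - 3 * h * (X 0 * X 2) + 3 * X 0 ^ 2 * X 2 ^ 2)
            - X 2 ^ 3 * X 4 * (X 1 * X 3 ^ 2 + X 0) * (X 0 + X 3)) * h := by
        rw [hf, hh]; ring
      rw [e]
      exact add_mem (Ideal.mul_mem_left _ _ hfJ) (Ideal.mul_mem_left _ _ hhJ)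
    · refine ⟨4, ?_⟩
      have e : (X 0 * X 1 : MvPolynomial (Fin 5) K) ^ 4 =
          (X 1 ^ 3 * (X 1 * X 3) ^ 2) * f +
          (g ^ 3 - 4 * g ^ 2 * (X 1 * X 3) ^ 2 + 6 * g * (X 1 * X 3) ^ 4
            - 4 * (X 1 * X 3) ^ 6
            + (X 1 * X 3) ^ 2 * (g ^ 2 - 3 * g * (X 0 * X 1) + 3 * X 0 ^ 2 * X 1 ^ 2)
            - X 1 ^ 3 * X 3 * (X 1 * X 3) * (X 2 * X 4 ^ 2 + X 0) * (X 0 + X 3)) * g := by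
        rw [hf, hg]; ring
      rw [e]
      exact add_mem (Ideal.mul_mem_left _ _ hfJ) (Ideal.mul_mem_left _ _ hgJ)
    · refine ⟨4, ?_⟩
      have e : (X 0 * X 2 : MvPolynomial (Fin 5) K) ^ 4 =
          (X 2 ^ 3 * (X 2 * X 4) ^ 2) * f +
          (h ^ 3 - 4 * h ^ 2 * (X 2 * X 4) ^ 2 + 6 * h * (X 2 * X 4) ^ 4
            - 4 * (X 2 * X 4) ^ 6
            + (X 2 * X 4) ^ 2 * (h ^ 2 - 3 * h * (X 0 * X 2) + 3 * X 0 ^ 2 * X 2 ^ 2)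
            - X 2 ^ 3 * X 4 * (X 2 * X 4) * (X 1 * X 3 ^ 2 + X 0) * (X 0 + X 3)) * h := by
        rw [hf, hh]; ring
      rw [e]
      exact add_mem (Ideal.mul_mem_left _ _ hfJ) (Ideal.mul_mem_left _ _ hhJ)
    · refine ⟨5, ?_⟩
      have e : (X 0 * X 3 : MvPolynomial (Fin 5) K) ^ 5 =
          (X 3 ^ 4 * (2 * (X 1 * X 3 ^ 2 + X 0) * (X 2 * X 4 ^ 2 + X 0) * (X 0 + X 3)
            - f - X 0 ^ 2 * (X 0 + X 3))) * f +
          (-(X 3 ^ 6 * (X 0 + X 3) ^ 2 * (X 0 * (X 2 * X 4 ^ 2 + X 0) + X 4 ^ 2 * h))) * g +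
          (-(X 3 ^ 4 * (X 0 + X 3) ^ 2 * X 0 * (X 1 * X 3 ^ 2 + X 0) * X 4 ^ 2)) * h := by
        rw [hf, hg, hh]; ring
      rw [e]
      exact add_mem (add_mem (Ideal.mul_mem_left _ _ hfJ) (Ideal.mul_mem_left _ _ hgJ))
        (Ideal.mul_mem_left _ _ hhJ)
end
end

section
/- Let R be a commutative ring, I an ideal, m₁,...,m_μ ∈ R monomial-like generators of I, and q₁, q₂ ∈ I with √(q₁,q₂) = √I. Suppose m₀ ∈ R with m₁ | m₀, write m_i^{ℓ_i} = a_{i1}q₁ + a_{i2}q₂ for each i, and set f_i = a₁₁a_{i2} − a₁₂a_{i1}. Then in R[x₀], the ideal J' = (x₀q₁ − a₁₂m₀, x₀q₂ + a₁₁m₀) contains x₀m₁^{ℓ₁} and x₀m_i^{ℓ_i} + f_i m₀ for every i, and x₀m_i ∈ √J' for all i. -/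
set_option synthInstance.maxHeartbeats 1000000
set_option maxHeartbeats 1000000

open MvPolynomial Ideal CategoryTheory

noncomputable section

open Polynomial in
/-- The computational core of Proposition 3: with
`J' = (x₀q₁ - a₁₂m₀, x₀q₂ + a₁₁m₀)` in `R[x₀]`, the ideal `J'` contains
`x₀m₁^{ℓ₁}` and every `x₀m_i^{ℓ_i} + f_i m₀`, and `x₀m_i ∈ √J'` for all `i`. -/
theorem stmt19 {R : Type*} [CommRing R] (μ : ℕ) (m : Fin (μ + 1) → R)
    (I : Ideal R) (hI : I = Ideal.span (Set.range m))
    (q₁ q₂ : R) (hq₁ : q₁ ∈ I) (hq₂ : q₂ ∈ I)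
    (hrad : Ideal.radical (Ideal.span {q₁, q₂}) = Ideal.radical I)
    (m₀ : R) (hdvd : m 0 ∣ m₀)
    (ℓ : Fin (μ + 1) → ℕ) (hℓ : ∀ i, 1 ≤ ℓ i)
    (a₁ a₂ : Fin (μ + 1) → R)
    (heq : ∀ i, m i ^ ℓ i = a₁ i * q₁ + a₂ i * q₂)
    (f : Fin (μ + 1) → R) (hf : ∀ i, f i = a₁ 0 * a₂ i - a₂ 0 * a₁ i)
    (J' : Ideal (Polynomial R))
    (hJ' : J' = Ideal.span
      {Polynomial.X * Polynomial.C q₁ - Polynomial.C (a₂ 0) * Polynomial.C m₀,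
       Polynomial.X * Polynomial.C q₂ + Polynomial.C (a₁ 0) * Polynomial.C m₀}) :
    (Polynomial.X : Polynomial R) * Polynomial.C (m 0 ^ ℓ 0) ∈ J' ∧
    (∀ i, (Polynomial.X : Polynomial R) * Polynomial.C (m i ^ ℓ i) +
      Polynomial.C (f i) * Polynomial.C m₀ ∈ J') ∧
    (∀ i, (Polynomial.X : Polynomial R) * Polynomial.C (m i) ∈ Ideal.radical J') := by
  have hmem : ∀ i, (Polynomial.X : Polynomial R) * Polynomial.C (m i ^ ℓ i) +
      Polynomial.C (f i) * Polynomial.C m₀ ∈ J' := by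
    intro i
    rw [hJ', Ideal.mem_span_pair]
    refine ⟨Polynomial.C (a₁ i), Polynomial.C (a₂ i), ?_⟩
    rw [heq i, hf i]
    simp only [map_add, _root_.map_mul, map_sub]
    ring
  have hf0 : f 0 = 0 := by rw [hf]; ring
  have h0 : (Polynomial.X : Polynomial R) * Polynomial.C (m 0 ^ ℓ 0) ∈ J' := by
    have := hmem 0
    rw [hf0] at this
    simpa using this
  -- X * C m₀ ∈ radical J'
  obtain ⟨c, hc⟩ := hdvd
  have hXm₀ : (Polynomial.X : Polynomial R) * Polynomial.C m₀ ∈ Ideal.radical J' := by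
    obtain ⟨k, hk⟩ := Nat.exists_eq_add_of_le (hℓ 0)
    refine ⟨ℓ 0, ?_⟩
    have key : ((Polynomial.X : Polynomial R) * Polynomial.C m₀) ^ ℓ 0 =
        (Polynomial.C (c ^ ℓ 0) * Polynomial.X ^ k) *
          (Polynomial.X * Polynomial.C (m 0 ^ ℓ 0)) := by
      rw [hc, hk]
      simp only [_root_.map_mul, map_pow, mul_pow]
      ring
    rw [key]
    exact Ideal.mul_mem_left _ _ h0
  refine ⟨h0, hmem, fun i => ?_⟩
  have hrJ : J' ≤ Ideal.radical J' := Ideal.le_radical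
  obtain ⟨k, hk⟩ := Nat.exists_eq_add_of_le (hℓ i)
  have hpow : ((Polynomial.X : Polynomial R) * Polynomial.C (m i)) ^ (ℓ i + 1) ∈
      Ideal.radical J' := by
    have key : ((Polynomial.X : Polynomial R) * Polynomial.C (m i)) ^ (ℓ i + 1) =
        Polynomial.C (m i) * (Polynomial.X ^ ℓ i *
          (Polynomial.X * Polynomial.C (m i ^ ℓ i) + Polynomial.C (f i) * Polynomial.C m₀)) -
        (Polynomial.C (m i) * Polynomial.C (f i) * Polynomial.X ^ k) *
          (Polynomial.X * Polynomial.C m₀) := by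
      rw [hk]
      simp only [map_pow, mul_pow, pow_succ]
      ring
    rw [key]
    exact Ideal.sub_mem _ (Ideal.mul_mem_left _ _ (hrJ (Ideal.mul_mem_left _ _ (hmem i))))
      (Ideal.mul_mem_left _ _ hXm₀)
  exact Ideal.mem_radical_of_pow_mem hpow
end
end
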